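/- Fix a real number σ with 0 ≤ σ < 1 and let k ∈ [−1,1]. Then the functions z ↦ ζ(k,z)/F(z) + η(k,z)/F̄(z) and z ↦ ζ(k,z)/F(z) − η(k,z)/F̄(z) have strictly negative derivative at every z > 0; in particular both functions are strictly decreasing on (0,∞). -/

import Mathlib

noncomputable section

open Real

/-- `F(z) = ((3+σ)/2)·sinh(2z) − (1−σ)·z`. -/
def F (σ z : ℝ) : ℝ := ((3 + σ) / 2) * Real.sinh (2 * z) - (1 - σ) * z

/-- `F̄(z) = ((3+σ)/2)·sinh(2z) + (1−σ)·z`. -/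
def Fbar (σ z : ℝ) : ℝ := ((3 + σ) / 2) * Real.sinh (2 * z) + (1 - σ) * z

/-- `ψ(k,z)`. -/
def psi (σ k z : ℝ) : ℝ :=
  (2 + (1 - σ) * z) * Real.cosh (k * z) * Real.cosh z
    + (-(1 + σ) + (1 - σ) * z) * Real.cosh (k * z) * Real.sinh z
    - (1 - σ) * k * z * Real.sinh (k * z) * Real.cosh z
    - (1 - σ) * k * z * Real.sinh (k * z) * Real.sinh z

/-- `ξ(k,z)`. -/
def xi (σ k z : ℝ) : ℝ :=
  -(1 - σ) * k * z * Real.cosh (k * z) * Real.cosh z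
    - (1 - σ) * k * z * Real.cosh (k * z) * Real.sinh z
    + (-(1 + σ) + (1 - σ) * z) * Real.sinh (k * z) * Real.cosh z
    + (2 + (1 - σ) * z) * Real.sinh (k * z) * Real.sinh z

/-- `ζ(k,z)`. -/
def zeta (σ k z : ℝ) : ℝ :=
  (4 / (1 - σ) - (1 + σ) * z) * Real.cosh (k * z) * Real.cosh z
    + ((1 + σ) ^ 2 / (1 - σ) + 2 * z) * Real.cosh (k * z) * Real.sinh z
    - 2 * k * z * Real.sinh (k * z) * Real.cosh z
    + (1 + σ) * k * z * Real.sinh (k * z) * Real.sinh z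

/-- `η(k,z)`. -/
def eta (σ k z : ℝ) : ℝ :=
  (1 + σ) * k * z * Real.cosh (k * z) * Real.cosh z
    - 2 * k * z * Real.cosh (k * z) * Real.sinh z
    + ((1 + σ) ^ 2 / (1 - σ) + 2 * z) * Real.sinh (k * z) * Real.cosh z
    + (4 / (1 - σ) - (1 + σ) * z) * Real.sinh (k * z) * Real.sinh z

/-- `g(s,k,z)`. -/
def g (σ s k z : ℝ) : ℝ :=
  Real.cosh (s * z) *
      (zeta σ k z / F σ z + z * psi σ k z / F σ z - s * z * xi σ k z / Fbar σ z)
    + Real.sinh (s * z) *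
      (eta σ k z / Fbar σ z + z * xi σ k z / Fbar σ z - s * z * psi σ k z / F σ z)

/-- `h(s,k,z) = (1+z·|k−s|)·exp(−z·|k−s|)`. -/
def hfun (s k z : ℝ) : ℝ := (1 + z * |k - s|) * Real.exp (-(z * |k - s|))

/-- `φ(s,k,z) = exp(−z)·g(s,k,z) + h(s,k,z)`. -/
def phi (σ s k z : ℝ) : ℝ := Real.exp (-z) * g σ s k z + hfun s k z

/-!
By the quotient rule the derivative of `ζ/F + η/F̄` is
`zetaQuotNum / F² + etaQuotNum / F̄²`. Since `ζ` is even and `η` is odd in `k`, the function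
`ζ/F − η/F̄` is the same sum at `−k`, and so is `zetaQuotNum − etaQuotNum`. As `0 < F ≤ F̄`,
the derivative is therefore negative once `zetaQuotNum + etaQuotNum < 0` for every `k ∈ [−1, 1]`.

Multiplied by `(1 − σ) e^{(3+k)z}`, this sum is a polynomial in `z`, `u = e^{2(1+k)z}` and
`v = e^{4z}`. Grouped as in `quotNumPoly`, each bracket is nonpositive as soon as
`u ≥ 1 + 2(1+k)z` and `v ≥ 1 + 4z`, and the term `−(3+k)(1+σ)(3+σ)u/2` is strictly negative.
-/

def zetaDeriv (σ k z : ℝ) : ℝ :=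
  (2 * σ * (1 + σ) / (1 - σ) + 2 * (1 - k ^ 2) * z) * cosh (k * z) * cosh z
    + (2 * (3 - σ) / (1 - σ) - (1 + σ) * (1 - k ^ 2) * z) * cosh (k * z) * sinh z
    + 2 * k * (1 + σ) / (1 - σ) * sinh (k * z) * (cosh z + sinh z)

def etaDeriv (σ k z : ℝ) : ℝ :=
  2 * k * (1 + σ) / (1 - σ) * cosh (k * z) * (cosh z + sinh z)
    + (2 * (3 - σ) / (1 - σ) - (1 + σ) * (1 - k ^ 2) * z) * sinh (k * z) * cosh z
    + (2 * σ * (1 + σ) / (1 - σ) + 2 * (1 - k ^ 2) * z) * sinh (k * z) * sinh z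

section Derivatives

variable (σ k z : ℝ)

theorem hasDerivAt_cosh_const_mul :
    HasDerivAt (fun t => cosh (k * t)) (k * sinh (k * z)) z := by
  simpa [mul_comm] using ((hasDerivAt_id z).const_mul k).cosh

theorem hasDerivAt_sinh_const_mul :
    HasDerivAt (fun t => sinh (k * t)) (k * cosh (k * z)) z := by
  simpa [mul_comm] using ((hasDerivAt_id z).const_mul k).sinh

theorem hasDerivAt_F : HasDerivAt (F σ) ((3 + σ) * cosh (2 * z) - (1 - σ)) z := by
  refine (((hasDerivAt_sinh_const_mul 2 z).const_mul ((3 + σ) / 2)).sub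
    ((hasDerivAt_id z).const_mul (1 - σ))).congr_deriv ?_
  ring

theorem hasDerivAt_Fbar : HasDerivAt (Fbar σ) ((3 + σ) * cosh (2 * z) + (1 - σ)) z := by
  refine (((hasDerivAt_sinh_const_mul 2 z).const_mul ((3 + σ) / 2)).add
    ((hasDerivAt_id z).const_mul (1 - σ))).congr_deriv ?_
  ring

variable {σ}

theorem hasDerivAt_zeta (hσ : σ ≠ 1) : HasDerivAt (zeta σ k) (zetaDeriv σ k z) z := by
  have ha := ((hasDerivAt_id z).const_mul (1 + σ)).const_sub (4 / (1 - σ))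
  have hb := ((hasDerivAt_id z).const_mul 2).const_add ((1 + σ) ^ 2 / (1 - σ))
  have hc := (hasDerivAt_id z).const_mul (2 * k)
  have hd := (hasDerivAt_id z).const_mul ((1 + σ) * k)
  have H := (((ha.mul (hasDerivAt_cosh_const_mul k z)).mul (hasDerivAt_cosh z)).add
    ((hb.mul (hasDerivAt_cosh_const_mul k z)).mul (hasDerivAt_sinh z))).sub
    ((hc.mul (hasDerivAt_sinh_const_mul k z)).mul (hasDerivAt_cosh z)) |>.add
    ((hd.mul (hasDerivAt_sinh_const_mul k z)).mul (hasDerivAt_sinh z))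
  refine H.congr_deriv ?_
  have : 1 - σ ≠ 0 := sub_ne_zero.mpr hσ.symm
  simp only [zetaDeriv, id, Pi.mul_apply]
  field_simp
  ring

theorem hasDerivAt_eta (hσ : σ ≠ 1) : HasDerivAt (eta σ k) (etaDeriv σ k z) z := by
  have ha := ((hasDerivAt_id z).const_mul (1 + σ)).const_sub (4 / (1 - σ))
  have hb := ((hasDerivAt_id z).const_mul 2).const_add ((1 + σ) ^ 2 / (1 - σ))
  have hc := (hasDerivAt_id z).const_mul (2 * k)
  have hd := (hasDerivAt_id z).const_mul ((1 + σ) * k)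
  have H := (((hd.mul (hasDerivAt_cosh_const_mul k z)).mul (hasDerivAt_cosh z)).sub
    ((hc.mul (hasDerivAt_cosh_const_mul k z)).mul (hasDerivAt_sinh z))).add
    ((hb.mul (hasDerivAt_sinh_const_mul k z)).mul (hasDerivAt_cosh z)) |>.add
    ((ha.mul (hasDerivAt_sinh_const_mul k z)).mul (hasDerivAt_sinh z))
  refine H.congr_deriv ?_
  have : 1 - σ ≠ 0 := sub_ne_zero.mpr hσ.symm
  simp only [etaDeriv, id, Pi.mul_apply]
  field_simp
  ring

end Derivatives

section Denominators

variable {σ z : ℝ}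

theorem F_pos (hσ : -1 < σ) (hz : 0 < z) : 0 < F σ z := by
  have h := Real.self_lt_sinh_iff.mpr (by linarith : 0 < 2 * z)
  unfold F
  nlinarith

theorem Fbar_pos (hσ : -3 ≤ σ) (hz : 0 < z) : 0 < Fbar σ z := by
  have h := Real.self_lt_sinh_iff.mpr (by linarith : 0 < 2 * z)
  unfold Fbar
  nlinarith

theorem F_le_Fbar (hσ : σ ≤ 1) (hz : 0 ≤ z) : F σ z ≤ Fbar σ z := by
  unfold F Fbar
  nlinarith

end Denominators

def zetaQuotNum (σ k z : ℝ) : ℝ :=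
  zetaDeriv σ k z * F σ z - zeta σ k z * ((3 + σ) * cosh (2 * z) - (1 - σ))

def etaQuotNum (σ k z : ℝ) : ℝ :=
  etaDeriv σ k z * Fbar σ z - eta σ k z * ((3 + σ) * cosh (2 * z) + (1 - σ))

section Parity

variable (σ k z : ℝ)

theorem zeta_neg_k : zeta σ (-k) z = zeta σ k z := by
  simp only [zeta, neg_mul, cosh_neg, sinh_neg]; ring

theorem eta_neg_k : eta σ (-k) z = -eta σ k z := by
  simp only [eta, neg_mul, cosh_neg, sinh_neg]; ring

theorem zetaQuotNum_neg_k : zetaQuotNum σ (-k) z = zetaQuotNum σ k z := by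
  simp only [zetaQuotNum, zetaDeriv, zeta_neg_k, neg_mul, cosh_neg, sinh_neg]; ring

theorem etaQuotNum_neg_k : etaQuotNum σ (-k) z = -etaQuotNum σ k z := by
  simp only [etaQuotNum, etaDeriv, eta_neg_k, neg_mul, cosh_neg, sinh_neg]; ring

end Parity

def quotNumPoly (σ k z u v : ℝ) : ℝ :=
  -(z / 8 * (1 - k) ^ 2 * (1 - σ) ^ 2 * (3 + σ) * u * (v - 1))
    + (z / 8 * (1 - k) ^ 2 * (1 - σ) * (3 + σ) ^ 2 - 2 * (1 - σ) * (1 + σ) * v)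
    + (z / 8 * (1 - k) * (1 + k) * (1 - σ) * (3 + σ) ^ 2 * v
        - 1 / 2 * (1 - k) * (1 + σ) * (3 + σ) * u * v)
    - 1 / 2 * (3 + k) * (1 + σ) * (3 + σ) * u
    - z ^ 2 / 2 * (1 - k) * (1 + k) * (1 - σ) ^ 2 * (3 + σ) * u
    - z / 4 * (1 - k) * (1 - σ) ^ 3 * v
    - z ^ 2 / 2 * (1 - k) * (1 + k) * (1 - σ) ^ 3 * v

theorem quotNumPoly_neg {σ k z u v : ℝ} (hσ0 : 0 ≤ σ) (hσ1 : σ < 1)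
    (hk : k ∈ Set.Icc (-1) 1) (hz : 0 < z) (hu : 1 + 2 * (1 + k) * z ≤ u) (hv : 1 + 4 * z ≤ v) :
    quotNumPoly σ k z u v < 0 := by
  obtain ⟨hk1, hk2⟩ := hk
  have hp : 0 ≤ 1 - k := by linarith
  have hq : 0 ≤ 1 + k := by linarith
  have hB : 0 < 1 - σ := by linarith
  have hu0 : 0 < u := by nlinarith
  have hv0 : 0 < v := by linarith
  have h₁ : 0 ≤ z / 8 * (1 - k) ^ 2 * (1 - σ) ^ 2 * (3 + σ) * u * (v - 1) := by
    have : 0 ≤ v - 1 := by linarith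
    positivity
  have h₂ : z / 8 * (1 - k) ^ 2 * (1 - σ) * (3 + σ) ^ 2 ≤ 2 * (1 - σ) * (1 + σ) * v := by
    have h8 : ((1 - k) * (3 + σ)) ^ 2 ≤ 8 ^ 2 :=
      pow_le_pow_left₀ (by positivity) (by nlinarith) 2
    calc z / 8 * (1 - k) ^ 2 * (1 - σ) * (3 + σ) ^ 2
        = z * (1 - σ) / 8 * ((1 - k) * (3 + σ)) ^ 2 := by ring
      _ ≤ z * (1 - σ) / 8 * 8 ^ 2 := by gcongr
      _ ≤ 2 * (1 - σ) * v := by nlinarith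
      _ ≤ 2 * (1 - σ) * (1 + σ) * v := by nlinarith [mul_nonneg (mul_nonneg hσ0 hB.le) hv0.le]
  have h₃ : z / 8 * (1 - k) * (1 + k) * (1 - σ) * (3 + σ) ^ 2 * v
      ≤ 1 / 2 * (1 - k) * (1 + σ) * (3 + σ) * u * v := by
    have h3 : (1 - σ) * (3 + σ) ≤ 3 := by nlinarith
    calc z / 8 * (1 - k) * (1 + k) * (1 - σ) * (3 + σ) ^ 2 * v
        = (1 - k) * (3 + σ) * v * (z * (1 + k) / 8 * ((1 - σ) * (3 + σ))) := by ring
      _ ≤ (1 - k) * (3 + σ) * v * ((1 + σ) / 2 * u) :=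
        mul_le_mul_of_nonneg_left (by nlinarith [mul_nonneg hz.le hq]) (by positivity)
      _ = 1 / 2 * (1 - k) * (1 + σ) * (3 + σ) * u * v := by ring
  have h₄ : 0 < 1 / 2 * (3 + k) * (1 + σ) * (3 + σ) * u := by
    have : 0 < 3 + k := by linarith
    positivity
  have h₅ : 0 ≤ z ^ 2 / 2 * (1 - k) * (1 + k) * (1 - σ) ^ 2 * (3 + σ) * u := by positivity
  have h₆ : 0 ≤ z / 4 * (1 - k) * (1 - σ) ^ 3 * v := by positivity
  have h₇ : 0 ≤ z ^ 2 / 2 * (1 - k) * (1 + k) * (1 - σ) ^ 3 * v := by positivity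
  unfold quotNumPoly
  linarith

theorem quotNum_add_mul_exp (σ k z : ℝ) (hσ : σ ≠ 1) :
    (1 - σ) * (zetaQuotNum σ k z + etaQuotNum σ k z) * exp ((3 + k) * z)
      = quotNumPoly σ k z (exp (2 * (1 + k) * z)) (exp (4 * z)) := by
  have : 1 - σ ≠ 0 := sub_ne_zero.mpr hσ.symm
  have e₁ : exp ((3 + k) * z) = exp z ^ 3 * exp (k * z) := by
    rw [← exp_nat_mul, ← exp_add]; push_cast; ring_nf
  have e₂ : exp (2 * (1 + k) * z) = exp z ^ 2 * exp (k * z) ^ 2 := by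
    rw [← exp_nat_mul, ← exp_nat_mul, ← exp_add]; push_cast; ring_nf
  have e₃ : exp (4 * z) = exp z ^ 4 := by
    rw [← exp_nat_mul]; push_cast; ring_nf
  have e₄ : exp (2 * z) = exp z ^ 2 := by
    rw [← exp_nat_mul]; push_cast; ring_nf
  simp only [zetaQuotNum, etaQuotNum, zetaDeriv, etaDeriv, zeta, eta, F, Fbar, quotNumPoly,
    cosh_eq, sinh_eq, exp_neg, e₁, e₂, e₃, e₄]
  field_simp
  ring

section QuotNum

variable {σ k z : ℝ}

theorem quotNum_add_neg (hσ0 : 0 ≤ σ) (hσ1 : σ < 1) (hk : k ∈ Set.Icc (-1) 1) (hz : 0 < z) :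
    zetaQuotNum σ k z + etaQuotNum σ k z < 0 := by
  have hu : 1 + 2 * (1 + k) * z ≤ exp (2 * (1 + k) * z) := by
    linarith [add_one_le_exp (2 * (1 + k) * z)]
  have hv : 1 + 4 * z ≤ exp (4 * z) := by linarith [add_one_le_exp (4 * z)]
  have h := quotNumPoly_neg hσ0 hσ1 hk hz hu hv
  rw [← quotNum_add_mul_exp σ k z hσ1.ne] at h
  exact neg_of_mul_neg_right (neg_of_mul_neg_left h (exp_pos _).le) (by linarith)

theorem quotNum_sub_neg (hσ0 : 0 ≤ σ) (hσ1 : σ < 1) (hk : k ∈ Set.Icc (-1) 1) (hz : 0 < z) :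
    zetaQuotNum σ k z - etaQuotNum σ k z < 0 := by
  have hk' : -k ∈ Set.Icc (-1) 1 := ⟨by linarith [hk.2], by linarith [hk.1]⟩
  simpa [zetaQuotNum_neg_k, etaQuotNum_neg_k, sub_eq_add_neg] using
    quotNum_add_neg hσ0 hσ1 hk' hz

end QuotNum

theorem div_sq_add_div_sq_neg {m₁ m₂ a b : ℝ} (hadd : m₁ + m₂ < 0) (hsub : m₁ - m₂ < 0)
    (ha : 0 < a) (hab : a ≤ b) : m₁ / a ^ 2 + m₂ / b ^ 2 < 0 := by
  have hm₁ : m₁ < 0 := by linarith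
  have hb : 0 < b := ha.trans_le hab
  calc m₁ / a ^ 2 + m₂ / b ^ 2 ≤ m₁ / b ^ 2 + m₂ / b ^ 2 := by
        gcongr ?_ + _
        rw [div_le_div_iff₀ (by positivity) (by positivity)]
        exact mul_le_mul_of_nonpos_left (pow_le_pow_left₀ ha.le hab 2) hm₁.le
    _ = (m₁ + m₂) / b ^ 2 := by ring
    _ < 0 := div_neg_of_neg_of_pos hadd (by positivity)

def zetaEtaQuot (σ k t : ℝ) : ℝ := zeta σ k t / F σ t + eta σ k t / Fbar σ t

section Quot

variable {σ k z : ℝ}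

theorem hasDerivAt_zetaEtaQuot (hσ0 : -1 < σ) (hσ1 : σ < 1) (hz : 0 < z) :
    HasDerivAt (zetaEtaQuot σ k)
      (zetaQuotNum σ k z / F σ z ^ 2 + etaQuotNum σ k z / Fbar σ z ^ 2) z :=
  ((hasDerivAt_zeta k z hσ1.ne).div (hasDerivAt_F σ z) (F_pos hσ0 hz).ne').add
    ((hasDerivAt_eta k z hσ1.ne).div (hasDerivAt_Fbar σ z) (Fbar_pos (by linarith) hz).ne')

theorem deriv_zetaEtaQuot_neg (hσ0 : 0 ≤ σ) (hσ1 : σ < 1) (hk : k ∈ Set.Icc (-1) 1)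
    (hz : 0 < z) : deriv (zetaEtaQuot σ k) z < 0 := by
  rw [(hasDerivAt_zetaEtaQuot (by linarith) hσ1 hz).deriv]
  exact div_sq_add_div_sq_neg (quotNum_add_neg hσ0 hσ1 hk hz) (quotNum_sub_neg hσ0 hσ1 hk hz)
    (F_pos (by linarith) hz) (F_le_Fbar hσ1.le hz.le)

theorem zetaEtaQuot_strictAntiOn (hσ0 : 0 ≤ σ) (hσ1 : σ < 1) (hk : k ∈ Set.Icc (-1) 1) :
    StrictAntiOn (zetaEtaQuot σ k) (Set.Ioi 0) := by
  refine strictAntiOn_of_deriv_neg (convex_Ioi 0) (fun x hx => ?_) (fun x hx => ?_)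
  · exact (hasDerivAt_zetaEtaQuot (by linarith) hσ1 hx).continuousAt.continuousWithinAt
  · rw [interior_Ioi] at hx
    exact deriv_zetaEtaQuot_neg hσ0 hσ1 hk hx

end Quot

/-- Inequality (4.6): for σ ∈ [0,1) and k ∈ [−1,1], the functions
z ↦ ζ/F ± η/F̄ have strictly negative derivative on (0,∞), and in particular
are strictly decreasing there. -/
theorem zeta_eta_quotient_decreasing (σ : ℝ) (hσ0 : 0 ≤ σ) (hσ1 : σ < 1)
    (k : ℝ) (hk : k ∈ Set.Icc (-1 : ℝ) 1) :
    (∀ z : ℝ, 0 < z →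
      deriv (fun t : ℝ => zeta σ k t / F σ t + eta σ k t / Fbar σ t) z < 0 ∧
      deriv (fun t : ℝ => zeta σ k t / F σ t - eta σ k t / Fbar σ t) z < 0) ∧
    StrictAntiOn (fun t : ℝ => zeta σ k t / F σ t + eta σ k t / Fbar σ t)
      (Set.Ioi 0) ∧
    StrictAntiOn (fun t : ℝ => zeta σ k t / F σ t - eta σ k t / Fbar σ t)
      (Set.Ioi 0) := by
  have hk' : -k ∈ Set.Icc (-1) 1 := ⟨by linarith [hk.2], by linarith [hk.1]⟩
  have hsub : (fun t => zeta σ k t / F σ t - eta σ k t / Fbar σ t) = zetaEtaQuot σ (-k) := by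
    funext t
    rw [zetaEtaQuot, zeta_neg_k, eta_neg_k, neg_div, sub_eq_add_neg]
  rw [hsub]
  exact ⟨fun z hz =>
      ⟨deriv_zetaEtaQuot_neg hσ0 hσ1 hk hz, deriv_zetaEtaQuot_neg hσ0 hσ1 hk' hz⟩,
    zetaEtaQuot_strictAntiOn hσ0 hσ1 hk, zetaEtaQuot_strictAntiOn hσ0 hσ1 hk'⟩
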